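/- Let n ≥ 4 and let C = (c_{ij}) be an n×n matrix over K with every entry nonzero. If Π_{i=1}^n c_{i,w(i)} = 1 for every permutation w ∈ S_n, then c_{ij} = c_{i1}·c_{1j}/c_{11} for all 1 ≤ i, j ≤ n; in particular rank(C) = 1. -/

import Mathlib

open Matrix Finset

/-
If every permutation product of `C` equals the same nonzero constant, then composing a
permutation `σ` with a transposition `(i k)` changes its product only in the rows `i` and `k`,
so `C i (σ i) * C k (σ k) = C i (σ k) * C k (σ i)`. Since any two entries in distinct rows and
columns lie on a common permutation, all `2 × 2` minors of `C` vanish. The entry `C 0 0`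
is nonzero (it lies on the identity), so `C` is the outer product of its first column and its
first row divided by `C 0 0`, a nonzero matrix of rank one.
-/

theorem Finset.prod_comp_swap_mul {α β M : Type*} [Fintype α] [DecidableEq α] [CommMonoid M]
    (f : α → β → M) (σ : α → β) {i k : α} (hik : i ≠ k) :
    (∏ x, f x (σ (Equiv.swap i k x))) * (f i (σ i) * f k (σ k)) =
      (∏ x, f x (σ x)) * (f i (σ k) * f k (σ i)) := by
  have hcompl : ∏ x ∈ {i, k}ᶜ, f x (σ (Equiv.swap i k x)) = ∏ x ∈ {i, k}ᶜ, f x (σ x) :=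
    prod_congr rfl fun x hx => by
      rw [mem_compl, mem_insert, mem_singleton, not_or] at hx
      rw [Equiv.swap_apply_of_ne_of_ne hx.1 hx.2]
  rw [← prod_mul_prod_compl {i, k}, ← prod_mul_prod_compl {i, k} (fun x => f x (σ x)), hcompl,
    prod_pair hik, prod_pair hik, Equiv.swap_apply_left, Equiv.swap_apply_right]
  ac_rfl

theorem Equiv.Perm.exists_apply_eq_and_apply_eq {α : Type*} [DecidableEq α] {i k j l : α}
    (hik : i ≠ k) (hjl : j ≠ l) : ∃ σ : Equiv.Perm α, σ i = j ∧ σ k = l := by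
  refine ⟨Equiv.swap (Equiv.swap i j k) l * Equiv.swap i j, ?_, by simp⟩
  have hk : Equiv.swap i j k ≠ j := by
    simpa using (Equiv.injective (Equiv.swap i j)).ne hik.symm
  simp [Equiv.swap_apply_of_ne_of_ne hk.symm hjl]

theorem Matrix.mul_eq_mul_of_prod_perm_eq {n M : Type*} [Fintype n] [DecidableEq n]
    [CommMonoidWithZero M] [IsCancelMulZero M] {A : Matrix n n M} {c : M} (hc : c ≠ 0)
    (hA : ∀ w : Equiv.Perm n, ∏ x, A x (w x) = c) (i k j l : n) :
    A i j * A k l = A i l * A k j := by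
  rcases eq_or_ne i k with rfl | hik
  · exact mul_comm _ _
  rcases eq_or_ne j l with rfl | hjl
  · rfl
  obtain ⟨σ, rfl, rfl⟩ := Equiv.Perm.exists_apply_eq_and_apply_eq hik hjl
  have hswap := prod_comp_swap_mul A σ hik
  have hprod_swap : ∏ x, A x (σ (Equiv.swap i k x)) = c := hA (σ * Equiv.swap i k)
  rw [hprod_swap, hA σ] at hswap
  exact mul_left_cancel₀ hc hswap

theorem Matrix.eq_vecMulVec_of_mul_eq_mul {m n K : Type*} [Field K] {A : Matrix m n K}
    (hA : ∀ i k j l, A i j * A k l = A i l * A k j) {i₀ : m} {j₀ : n} (h₀ : A i₀ j₀ ≠ 0) :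
    A = vecMulVec (fun i => A i j₀) (fun j => A i₀ j / A i₀ j₀) := by
  ext i j
  rw [vecMulVec_apply, ← mul_div_assoc, eq_div_iff h₀]
  exact hA i i₀ j j₀

theorem Matrix.one_le_rank_of_ne_zero {m n K : Type*} [Fintype n] [Field K] {A : Matrix m n K}
    (hA : A ≠ 0) : 1 ≤ A.rank := by
  rw [Nat.one_le_iff_ne_zero, Ne, Matrix.rank, Submodule.finrank_eq_zero, LinearMap.range_eq_bot]
  contrapose! hA
  classical
  ext i j
  simpa using congrFun (LinearMap.congr_fun hA (Pi.single j 1)) i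

theorem Matrix.rank_eq_one_of_mul_eq_mul {m n K : Type*} [Fintype n] [Field K]
    {A : Matrix m n K} (hA : ∀ i k j l, A i j * A k l = A i l * A k j) {i₀ : m} {j₀ : n}
    (h₀ : A i₀ j₀ ≠ 0) : A.rank = 1 := by
  refine le_antisymm ?_ (one_le_rank_of_ne_zero fun h => h₀ (by simp [h]))
  rw [eq_vecMulVec_of_mul_eq_mul hA h₀]
  exact rank_vecMulVec_le _ _

theorem rank_one_of_all_perm_products_one {K : Type*} [Field K]
    {n : ℕ} (hn : 4 ≤ n) (C : Matrix (Fin n) (Fin n) K)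
    (h : ∀ w : Equiv.Perm (Fin n), ∏ i, C i (w i) = 1) :
    (∀ i j : Fin n, C i j = C i ⟨0, by omega⟩ * C ⟨0, by omega⟩ j / C ⟨0, by omega⟩ ⟨0, by omega⟩) ∧
      C.rank = 1 := by
  set z : Fin n := ⟨0, by omega⟩
  have hminors := mul_eq_mul_of_prod_perm_eq one_ne_zero h
  have hdiag : ∏ i, C i i ≠ 0 := (h 1).symm ▸ one_ne_zero
  have hzz : C z z ≠ 0 := prod_ne_zero_iff.mp hdiag z (mem_univ z)
  refine ⟨fun i j => ?_, rank_eq_one_of_mul_eq_mul hminors hzz⟩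
  rw [mul_div_assoc]
  exact congrFun₂ (eq_vecMulVec_of_mul_eq_mul hminors hzz) i j
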